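/- Let (c_n) be a sequence of positive reals tending to infinity such that for every permutation (c'_n) of (c_n) the sequence (n/c'_n) is unbounded. Then for every a > 1, ε > 0, S > 0, l ∈ ℤ, and M ∈ ℕ ∪ {0}, there exist T > S, a natural number N > M, positive reals b_{M+1},...,b_N, and a continuous, nonnegative, integrable function g : [0,∞) → ℝ such that 1/a ≤ b_n/c_n ≤ a for M < n ≤ N, ∫₀^∞ g < ε, g vanishes outside [S,T], and for every x ∈ [a^{l−1}, a^l] there is some n with M < n ≤ N and g(b_n · x) ≥ 1. -/

import Mathlib

open MeasureTheory Filter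


/-- Any real sequence tending to infinity admits a "sorting" bijection:
for each `n`, there are more than `n` indices `m` with `c m ≤ c (σ n)`. -/
lemma exists_sorting_perm (c : ℕ → ℝ) (hlim : Tendsto c atTop atTop) :
    ∃ σ : ℕ → ℕ, Function.Bijective σ ∧
      ∀ n : ℕ, ∃ G : Finset ℕ, (∀ m ∈ G, c m ≤ c (σ n)) ∧ n < G.card := by
  classical
  have hfin : ∀ x : ℝ, {m : ℕ | c m ≤ x}.Finite := by
    intro x
    have h1 : ∀ᶠ m in atTop, x < c m := hlim.eventually (eventually_gt_atTop x)
    rw [← Nat.cofinite_eq_atTop] at h1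
    have := Filter.eventually_cofinite.mp h1
    exact this.subset (fun m hm => not_lt.2 hm)
  set r : ℕ → ℕ → Prop := fun m n => c m < c n ∨ (c m = c n ∧ m < n) with hr
  have r_irrefl : ∀ n, ¬ r n n := by
    intro n h
    rcases h with h | ⟨_, h⟩ <;> exact lt_irrefl _ h
  have r_trans : ∀ {x y z}, r x y → r y z → r x z := by
    rintro x y z (h1 | ⟨h1, h1'⟩) (h2 | ⟨h2, h2'⟩)
    · exact Or.inl (h1.trans h2)
    · exact Or.inl (h2 ▸ h1)
    · exact Or.inl (h1 ▸ h2)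
    · exact Or.inr ⟨h1.trans h2, h1'.trans h2'⟩
  have r_total : ∀ {m n}, m ≠ n → r m n ∨ r n m := by
    intro m n hmn
    rcases lt_trichotomy (c m) (c n) with h | h | h
    · exact Or.inl (Or.inl h)
    · rcases lt_or_gt_of_ne hmn with h' | h'
      · exact Or.inl (Or.inr ⟨h, h'⟩)
      · exact Or.inr (Or.inr ⟨h.symm, h'⟩)
    · exact Or.inr (Or.inl h)
  have Pfin : ∀ n, {m | r m n}.Finite := fun n =>
    (hfin (c n)).subset (by
      rintro m (h | ⟨h, _⟩)
      · exact le_of_lt h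
      · exact le_of_eq h)
  set ρ : ℕ → ℕ := fun n => (Pfin n).toFinset.card with hρ
  have key : ∀ m n, r m n → ρ m < ρ n := by
    intro m n hmn
    apply Finset.card_lt_card
    rw [Finset.ssubset_iff_of_subset]
    · exact ⟨m, by simpa using hmn, by simpa using r_irrefl m⟩
    · intro x hx
      simp only [Set.Finite.mem_toFinset, Set.mem_setOf_eq] at hx ⊢
      exact r_trans hx hmn
  have ρinj : Function.Injective ρ := by
    intro m n h
    by_contra hne
    rcases r_total hne with h' | h'
    · exact absurd h (Nat.ne_of_lt (key _ _ h'))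
    · exact absurd h.symm (Nat.ne_of_lt (key _ _ h'))
  -- predecessor step
  have pred : ∀ n, 0 < ρ n → ∃ m, r m n ∧ ρ m + 1 = ρ n := by
    intro n hn
    set F := (Pfin n).toFinset with hF
    have hne : F.Nonempty := Finset.card_pos.mp hn
    obtain ⟨b0, hb0F, hb0max⟩ := Finset.exists_max_image F c hne
    set G := F.filter (fun m => c b0 ≤ c m) with hG
    have hGne : G.Nonempty := ⟨b0, by simp [hG, hb0F]⟩
    set m := G.max' hGne with hm
    have hmG : m ∈ G := Finset.max'_mem _ _
    have hmF : m ∈ F := (Finset.mem_filter.mp hmG).1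
    have hcm : c m = c b0 :=
      le_antisymm (hb0max m hmF) (Finset.mem_filter.mp hmG).2
    have hmax : ∀ x ∈ F, x = m ∨ r x m := by
      intro x hxF
      rcases lt_or_eq_of_le (hb0max x hxF) with h | h
      · exact Or.inr (Or.inl (hcm ▸ h))
      · have hxG : x ∈ G := Finset.mem_filter.mpr ⟨hxF, le_of_eq h.symm⟩
        rcases lt_or_eq_of_le (Finset.le_max' G x hxG) with h' | h'
        · exact Or.inr (Or.inr ⟨by rw [h, hcm], h'⟩)
        · exact Or.inl h'
    have hrmn : r m n := by
      rw [hF, Set.Finite.mem_toFinset] at hmF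
      exact hmF
    refine ⟨m, hrmn, ?_⟩
    have : (Pfin m).toFinset = F.erase m := by
      ext x
      simp only [Set.Finite.mem_toFinset, Set.mem_setOf_eq, Finset.mem_erase]
      constructor
      · intro hx
        refine ⟨fun hxm => r_irrefl m (hxm ▸ hx), ?_⟩
        simp only [hF, Set.Finite.mem_toFinset, Set.mem_setOf_eq]
        exact r_trans hx hrmn
      · rintro ⟨hxm, hxF⟩
        rcases hmax x (by simpa [hF] using hxF) with h | h
        · exact absurd h hxm
        · exact h
    have hmF' : m ∈ F := by rw [hF, Set.Finite.mem_toFinset]; exact hrmn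
    have hcard : F.card = ρ n := by rw [hρ, hF]
    have h1 : 0 < F.card := by rw [hcard]; exact hn
    have e1 : ρ m = F.card - 1 := by
      simp only [hρ]
      rw [this, Finset.card_erase_of_mem hmF']
    omega
  -- surjectivity of ρ
  have unb : ∀ k : ℕ, ∃ n, k ≤ ρ n := by
    intro k
    by_contra hcon
    push_neg at hcon
    have h1 : (Finset.range (k + 1)).image ρ ⊆ Finset.range k := by
      intro x hx
      simp only [Finset.mem_image] at hx
      obtain ⟨n, _, rfl⟩ := hx
      exact Finset.mem_range.mpr (hcon n)
    have h2 := Finset.card_le_card h1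
    rw [Finset.card_image_of_injective _ ρinj, Finset.card_range,
      Finset.card_range] at h2
    omega
  have step : ∀ j n, j ≤ ρ n → ∃ m, ρ m = ρ n - j := by
    intro j
    induction j with
    | zero => exact fun n _ => ⟨n, by omega⟩
    | succ j ih =>
      intro n hj
      obtain ⟨m, hm⟩ := ih n (by omega)
      have hpos : 0 < ρ m := by omega
      obtain ⟨m', _, hm'⟩ := pred m hpos
      exact ⟨m', by omega⟩
  have ρsurj : Function.Surjective ρ := by
    intro k
    obtain ⟨n, hn⟩ := unb k
    obtain ⟨m, hm⟩ := step (ρ n - k) n (by omega)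
    exact ⟨m, by omega⟩
  set σ := (Equiv.ofBijective ρ ⟨ρinj, ρsurj⟩).symm with hσ
  refine ⟨σ, σ.bijective, fun n => ?_⟩
  have hρσ : ρ (σ n) = n := (Equiv.ofBijective ρ ⟨ρinj, ρsurj⟩).apply_symm_apply n
  refine ⟨insert (σ n) (Pfin (σ n)).toFinset, ?_, ?_⟩
  · intro x hx
    rcases Finset.mem_insert.mp hx with h | h
    · exact le_of_eq (by rw [h])
    · simp only [Set.Finite.mem_toFinset, Set.mem_setOf_eq] at h
      rcases h with h | ⟨h, _⟩
      · exact le_of_lt h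
      · exact le_of_eq h
  · rw [Finset.card_insert_of_notMem (by simpa using r_irrefl (σ n))]
    simp only [hρ] at hρσ
    omega


lemma finite_le_of_tendsto (c : ℕ → ℝ) (hlim : Tendsto c atTop atTop) (x : ℝ) :
    {m : ℕ | c m ≤ x}.Finite := by
  have h1 : ∀ᶠ m in atTop, x < c m := hlim.eventually (eventually_gt_atTop x)
  rw [← Nat.cofinite_eq_atTop] at h1
  exact (Filter.eventually_cofinite.mp h1).subset (fun m hm => not_lt.2 hm)

lemma density_lemma (c : ℕ → ℝ) (hc : ∀ n, 0 < c n) (hlim : Tendsto c atTop atTop)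
    (hperm : ∀ σ : ℕ → ℕ, Function.Bijective σ →
      ¬ ∃ L : ℝ, ∀ n : ℕ, (n : ℝ) / c (σ n) ≤ L)
    (a : ℝ) (ha : 1 < a) (M : ℕ) (C : ℝ) (hC : 0 < C) (v₀ : ℝ) :
    ∃ v : ℝ, v₀ ≤ v ∧ 1 ≤ v ∧ ∃ F : Finset ℕ,
      (∀ n ∈ F, M < n ∧ v ≤ c n ∧ c n ≤ a * v) ∧ C * v ≤ F.card := by
  classical
  by_contra hcon
  push_neg at hcon
  set w := max v₀ 1 with hw
  have hw1 : (1 : ℝ) ≤ w := le_max_right _ _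
  have hw0 : (0 : ℝ) < w := lt_of_lt_of_le one_pos hw1
  have ha0 : (0 : ℝ) < a := lt_trans one_pos ha
  set B₀ : ℕ := (finite_le_of_tendsto c hlim (a * w)).toFinset.card with hB₀
  set D : ℝ := C / (a - 1) with hD
  have hD0 : 0 < D := div_pos hC (by linarith)
  have hDa : D * a = D + C := by
    have h : D * (a - 1) = C := by
      rw [hD, div_mul_cancel₀ C (show a - 1 ≠ 0 by linarith)]
    linear_combination h
  -- base case helper
  have base : ∀ x : ℝ, 0 ≤ x → x ≤ a * w → ∀ G : Finset ℕ,
      (∀ m ∈ G, M < m ∧ c m ≤ x) → (G.card : ℝ) ≤ B₀ + D * x := by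
    intro x hx0 hxw G hG
    have hsub : G ⊆ (finite_le_of_tendsto c hlim (a * w)).toFinset := by
      intro m hm
      simp only [Set.Finite.mem_toFinset, Set.mem_setOf_eq]
      exact le_trans (hG m hm).2 hxw
    have := Finset.card_le_card hsub
    have h2 : (G.card : ℝ) ≤ B₀ := by exact_mod_cast this
    nlinarith
  have main : ∀ j : ℕ, ∀ x : ℝ, 0 ≤ x → x ≤ w * a ^ j → ∀ G : Finset ℕ,
      (∀ m ∈ G, M < m ∧ c m ≤ x) → (G.card : ℝ) ≤ B₀ + D * x := by
    intro j
    induction j with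
    | zero =>
      intro x hx0 hxle G hG
      have hxw : x ≤ w := by rw [pow_zero, mul_one] at hxle; exact hxle
      have : x ≤ a * w := by nlinarith [mul_pos (show (0:ℝ) < a - 1 by linarith) hw0]
      exact base x hx0 this G hG
    | succ j ih =>
      intro x hx0 hxle G hG
      by_cases hcase : x ≤ a * w
      · exact base x hx0 hcase G hG
      · push_neg at hcase
        set v : ℝ := x / a with hv
        have hv0 : 0 < v := div_pos (lt_trans (mul_pos ha0 hw0) hcase) ha0
        have hwv : w < v := by
          rw [hv, lt_div_iff₀ ha0]
          linarith [mul_comm a w]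
        have hav : a * v = x := by rw [hv]; field_simp [ha0.ne']
        set G₁ := G.filter (fun m => c m ≤ v) with hG₁
        set G₂ := G.filter (fun m => ¬ (c m ≤ v)) with hG₂
        have hsplit : G₁.card + G₂.card = G.card :=
          Finset.card_filter_add_card_filter_not _
        have h1 : (G₁.card : ℝ) ≤ B₀ + D * v := by
          apply ih v (le_of_lt hv0) _ G₁
          · intro m hm
            have hmG := Finset.mem_filter.mp hm
            exact ⟨(hG m hmG.1).1, hmG.2⟩
          · rw [hv, div_le_iff₀ ha0]
            calc x ≤ w * a ^ (j + 1) := hxle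
            _ = w * a ^ j * a := by ring
        have h2 : (G₂.card : ℝ) < C * v := by
          apply hcon v (le_trans (le_max_left _ _) (le_of_lt hwv))
            (le_trans hw1 (le_of_lt hwv))
          intro n hn
          have hnG := Finset.mem_filter.mp hn
          refine ⟨(hG n hnG.1).1, le_of_lt (not_le.mp hnG.2), ?_⟩
          rw [hav]
          exact (hG n hnG.1).2
        have hsum : (G.card : ℝ) = G₁.card + G₂.card := by exact_mod_cast hsplit.symm
        have hfin : D * v + C * v = D * x := by
          rw [← hav]; nlinarith [hDa]
        linarith
  -- global counting bound
  set B' : ℝ := (M : ℝ) + 1 + B₀ with hB'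
  have hB'0 : 0 ≤ B' := by positivity
  have hN : ∀ x : ℝ, 0 ≤ x → ∀ G : Finset ℕ,
      (∀ m ∈ G, c m ≤ x) → (G.card : ℝ) ≤ B' + D * x := by
    intro x hx0 G hG
    obtain ⟨j, hj⟩ := pow_unbounded_of_one_lt (x / w) ha
    have hxj : x ≤ w * a ^ j := by
      rw [div_lt_iff₀ hw0] at hj
      linarith [mul_comm (a ^ j) w]
    set G₁ := G.filter (fun m => M < m) with hG₁
    set G₂ := G.filter (fun m => ¬ (M < m)) with hG₂
    have hsplit : G₁.card + G₂.card = G.card :=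
      Finset.card_filter_add_card_filter_not _
    have h1 : (G₁.card : ℝ) ≤ B₀ + D * x := by
      apply main j x hx0 hxj G₁
      intro m hm
      have hmG := Finset.mem_filter.mp hm
      exact ⟨hmG.2, hG m hmG.1⟩
    have h2 : G₂.card ≤ M + 1 := by
      have : G₂ ⊆ Finset.range (M + 1) := by
        intro m hm
        have hmG := Finset.mem_filter.mp hm
        exact Finset.mem_range.mpr (by omega)
      simpa using Finset.card_le_card this
    have h2' : (G₂.card : ℝ) ≤ (M : ℝ) + 1 := by exact_mod_cast h2
    have hsum : (G.card : ℝ) = G₁.card + G₂.card := by exact_mod_cast hsplit.symm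
    rw [hB']
    linarith
  -- lower bound for c
  obtain ⟨γ, hγ0, hγ⟩ : ∃ γ : ℝ, 0 < γ ∧ ∀ n, γ ≤ c n := by
    set F0 := (finite_le_of_tendsto c hlim (c 0)).toFinset with hF0
    have h0F : 0 ∈ F0 := by simp [hF0]
    obtain ⟨m, hmF, hmin⟩ := Finset.exists_min_image F0 c ⟨0, h0F⟩
    refine ⟨c m, hc m, fun n => ?_⟩
    by_cases hn : c n ≤ c 0
    · exact hmin n (by simp [hF0, hn])
    · exact le_trans (hmin 0 h0F) (le_of_lt (not_le.mp hn))
  -- the sorting permutation contradicts hperm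
  obtain ⟨σ, hbij, hσ⟩ := exists_sorting_perm c hlim
  apply hperm σ hbij
  refine ⟨B' / γ + D, fun n => ?_⟩
  obtain ⟨G, hGle, hGcard⟩ := hσ n
  have hcount : (G.card : ℝ) ≤ B' + D * c (σ n) :=
    hN _ (le_of_lt (hc _)) G hGle
  have hn1 : (n : ℝ) + 1 ≤ G.card := by exact_mod_cast hGcard
  have hcσ : 0 < c (σ n) := hc _
  rw [div_le_iff₀ hcσ]
  have hγσ : γ ≤ c (σ n) := hγ _
  have key : B' ≤ B' / γ * c (σ n) := by
    rw [div_mul_eq_mul_div, le_div_iff₀ hγ0]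
    nlinarith
  nlinarith
set_option maxHeartbeats 1000000 in
theorem stmt16 (c : ℕ → ℝ) (hc : ∀ n, 0 < c n) (hlim : Tendsto c atTop atTop)
    (hperm : ∀ σ : ℕ → ℕ, Function.Bijective σ →
      ¬ ∃ L : ℝ, ∀ n : ℕ, (n : ℝ) / c (σ n) ≤ L)
    (a ε S : ℝ) (ha : 1 < a) (hε : 0 < ε) (hS : 0 < S) (l : ℤ) (M : ℕ) :
    ∃ T : ℝ, S < T ∧ ∃ N : ℕ, M < N ∧ ∃ b : ℕ → ℝ,
      (∀ n, M < n → n ≤ N → 0 < b n ∧ 1 / a ≤ b n / c n ∧ b n / c n ≤ a) ∧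
      ∃ g : ℝ → ℝ, Continuous g ∧ (∀ x, 0 ≤ x → 0 ≤ g x) ∧
        IntegrableOn g (Set.Ici 0) ∧
        (∫ x in Set.Ici (0 : ℝ), g x) < ε ∧
        (∀ x, 0 ≤ x → x ∉ Set.Icc S T → g x = 0) ∧
        ∀ x ∈ Set.Icc (a ^ ((l : ℝ) - 1)) (a ^ (l : ℝ)),
          ∃ n, M < n ∧ n ≤ N ∧ 1 ≤ g (b n * x) := by
  classical
  have ha0 : (0 : ℝ) < a := lt_trans one_pos ha
  set A := a ^ ((l : ℝ) - 1) with hA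
  have hA0 : 0 < A := Real.rpow_pos_of_pos ha0 _
  have hloga : 0 < Real.log a := Real.log_pos ha
  set C : ℝ := 2 * a * A * Real.log a / ε + Real.log a + 2 with hC
  have hC0 : 0 < C := by positivity
  obtain ⟨v, hvv₁, hv1, F, hF, hFcard⟩ :=
    density_lemma c hc hlim hperm a ha M C hC0 ((S + ε) / (a * A))
  have hv0 : (0 : ℝ) < v := lt_of_lt_of_le one_pos hv1
  set u : ℝ := a * A * v with hu
  have hu0 : 0 < u := by positivity
  have huS : S + ε ≤ u := by
    have := (div_le_iff₀ (by positivity : (0:ℝ) < a * A)).mp hvv₁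
    nlinarith
  set β : ℝ := 1 + ε / (2 * u) with hβ
  have hβ1 : 1 < β := by
    have h1 : 0 < ε / (2 * u) := by positivity
    have h2 : 1 < 1 + ε / (2 * u) := by linarith
    rwa [← hβ] at h2
  have hβ0 : 0 < β := lt_trans one_pos hβ1
  -- K : minimal power of β exceeding a
  have hex : ∃ k : ℕ, a < β ^ k := pow_unbounded_of_one_lt a hβ1
  set K := Nat.find hex with hK
  have hKspec : a < β ^ K := Nat.find_spec hex
  have hK1 : 1 ≤ K := by
    by_contra h
    have hK0 : K = 0 := by omega
    rw [hK0, pow_zero] at hKspec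
    linarith
  have hKpred : β ^ (K - 1) ≤ a :=
    not_lt.mp (Nat.find_min hex (show K - 1 < K by omega))
  -- bound on K
  have hKCv : (K : ℝ) ≤ C * v := by
    have e1 : ((K : ℝ) - 1) * Real.log β ≤ Real.log a := by
      have h := Real.log_le_log (pow_pos hβ0 (K - 1)) hKpred
      rw [Real.log_pow] at h
      have : ((K - 1 : ℕ) : ℝ) = (K : ℝ) - 1 := by
        push_cast [Nat.cast_sub hK1]; ring
      rw [this] at h
      exact h
    have e2 : (β - 1) / β ≤ Real.log β := by
      have h := Real.log_le_sub_one_of_pos (show (0:ℝ) < β⁻¹ by positivity)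
      rw [Real.log_inv] at h
      have h2 : (β - 1) / β = 1 - β⁻¹ := by field_simp
      rw [h2]
      linarith
    have hK0' : (0:ℝ) ≤ (K : ℝ) - 1 := by
      have : (1:ℝ) ≤ (K:ℝ) := by exact_mod_cast hK1
      linarith
    have e3 : ((K : ℝ) - 1) * ((β - 1) / β) ≤ Real.log a :=
      le_trans (mul_le_mul_of_nonneg_left e2 hK0') e1
    have f1 : ((K : ℝ) - 1) * (β - 1) ≤ Real.log a * β := by
      have e3' : ((K : ℝ) - 1) * (β - 1) / β ≤ Real.log a := by
        rw [mul_div_assoc]; exact e3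
      exact (div_le_iff₀ hβ0).mp e3'
    have hb2 : (β - 1) * (2 * u) = ε := by
      rw [hβ]
      field_simp
      ring
    have f2 : ((K : ℝ) - 1) * ε ≤ Real.log a * β * (2 * u) := by
      calc ((K : ℝ) - 1) * ε = ((K : ℝ) - 1) * (β - 1) * (2 * u) := by
            rw [mul_assoc, hb2]
        _ ≤ Real.log a * β * (2 * u) :=
            mul_le_mul_of_nonneg_right f1 (by positivity)
    have f3 : Real.log a * β * (2 * u) = 2 * u * Real.log a + ε * Real.log a := by
      rw [hβ]
      field_simp
    have hCε : C * ε = 2 * a * A * Real.log a + ε * Real.log a + 2 * ε := by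
      rw [hC]
      field_simp
    have hKε : (K : ℝ) * ε ≤ C * v * ε := by
      rw [f3, hu] at f2
      nlinarith [mul_nonneg (sub_nonneg.mpr hv1) (mul_pos hε hloga).le,
        mul_nonneg (sub_nonneg.mpr hv1) hε.le]
    exact le_of_mul_le_mul_right hKε hε
  have hKF : K ≤ F.card := by
    have : (K : ℝ) ≤ (F.card : ℝ) := le_trans hKCv hFcard
    exact_mod_cast this
  -- choose K indices in F
  obtain ⟨t, hts, htcard⟩ := Finset.exists_subset_card_eq hKF
  set e : Fin K → ℕ := fun k => (t.equivFin.symm (Fin.cast htcard.symm k) : ℕ) with he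
  have he_inj : Function.Injective e := by
    intro k1 k2 hk
    have h1 : t.equivFin.symm (Fin.cast htcard.symm k1)
        = t.equivFin.symm (Fin.cast htcard.symm k2) := Subtype.coe_injective hk
    have h2 := t.equivFin.symm.injective h1
    have h3 := congrArg Fin.val h2
    exact Fin.ext h3
  have he_mem : ∀ k, e k ∈ F := fun k => hts (t.equivFin.symm _).2
  -- define b
  set b : ℕ → ℝ := fun n =>
    if hn : ∃ k : Fin K, e k = n then u / (A * β ^ ((hn.choose : Fin K) : ℕ))
    else c n with hb
  have hbe : ∀ k : Fin K, b (e k) = u / (A * β ^ (k : ℕ)) := by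
    intro k
    have hn : ∃ k' : Fin K, e k' = e k := ⟨k, rfl⟩
    simp only [hb, dif_pos hn]
    rw [he_inj hn.choose_spec]
  -- N
  set N := (insert (M + 1) F).max' (Finset.insert_nonempty _ _) with hN
  have hMN : M < N := by
    have := Finset.le_max' (insert (M + 1) F) (M + 1) (Finset.mem_insert_self _ _)
    omega
  have hFN : ∀ n ∈ F, n ≤ N := fun n hn =>
    Finset.le_max' (insert (M + 1) F) n (Finset.mem_insert_of_mem hn)
  -- bump function parameters
  set h0 : ℝ := ε / 8 with hh0
  have h0pos : 0 < h0 := by positivity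
  set p : ℝ := u - h0 with hp
  set q : ℝ := β * u + h0 with hq
  have hSp : S < p := by
    rw [hp, hh0]; linarith
  have hp0 : 0 < p := lt_trans hS hSp
  have huq : β * u ≤ q - h0 := by rw [hq]; linarith
  have hpu : p + h0 ≤ u := by rw [hp]; linarith
  have hβu : u < β * u := (lt_mul_iff_one_lt_left hu0).mpr hβ1
  have hpq : p < q := by rw [hp, hq]; linarith
  -- the bump function
  set g : ℝ → ℝ := fun x => max 0 (min 1 (min ((x - p) / h0) ((q - x) / h0)))
    with hg
  have gcont : Continuous g := by
    apply continuous_const.max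
    apply continuous_const.min
    exact ((continuous_id.sub continuous_const).div_const _).min
      ((continuous_const.sub continuous_id).div_const _)
  have gnonneg : ∀ x : ℝ, 0 ≤ g x := fun x => le_max_left _ _
  have gle1 : ∀ x : ℝ, g x ≤ 1 := fun x => max_le zero_le_one (min_le_left _ _)
  have gzero : ∀ x : ℝ, x < p ∨ q < x → g x = 0 := by
    intro x hx
    have hmin : min ((x - p) / h0) ((q - x) / h0) ≤ 0 := by
      rcases hx with hx | hx
      · exact le_trans (min_le_left _ _)
          (div_nonpos_iff.mpr (Or.inr ⟨by linarith, by linarith⟩))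
      · exact le_trans (min_le_right _ _)
          (div_nonpos_iff.mpr (Or.inr ⟨by linarith, by linarith⟩))
    have : min 1 (min ((x - p) / h0) ((q - x) / h0)) ≤ 0 :=
      le_trans (min_le_right _ _) hmin
    exact max_eq_left this
  have gone : ∀ y : ℝ, u ≤ y → y ≤ β * u → 1 ≤ g y := by
    intro y hy1 hy2
    have h1 : 1 ≤ (y - p) / h0 := by
      rw [le_div_iff₀ h0pos]; linarith
    have h2 : 1 ≤ (q - y) / h0 := by
      rw [le_div_iff₀ h0pos]; linarith
    have : (1:ℝ) ≤ min 1 (min ((y - p) / h0) ((q - y) / h0)) :=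
      le_min le_rfl (le_min h1 h2)
    exact le_trans this (le_max_right _ _)
  -- integrability
  have hgcs : HasCompactSupport g := by
    apply HasCompactSupport.intro (isCompact_Icc (a := p) (b := q))
    intro x hx
    apply gzero
    simp only [Set.mem_Icc, not_and_or, not_le] at hx
    tauto
  have hgint : Integrable g := gcont.integrable_of_hasCompactSupport hgcs
  -- integral bound
  have hqp : q - p = 3 * ε / 4 := by
    rw [hq, hp, hβ, hh0]
    field_simp
    ring
  have hintlt : (∫ x in Set.Ici (0:ℝ), g x) < ε := by
    have hind : ∀ x : ℝ, g x ≤ Set.indicator (Set.Icc p q) (fun _ => (1:ℝ)) x := by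
      intro x
      by_cases hx : x ∈ Set.Icc p q
      · rw [Set.indicator_of_mem hx]; exact gle1 x
      · rw [Set.indicator_of_notMem hx]
        have : x < p ∨ q < x := by
          simp only [Set.mem_Icc, not_and_or, not_le] at hx
          tauto
        rw [gzero x this]
    have hiind : Integrable (Set.indicator (Set.Icc p q) (fun _ => (1:ℝ))) := by
      rw [integrable_indicator_iff measurableSet_Icc]
      exact integrableOn_const measure_Icc_lt_top.ne
    calc (∫ x in Set.Ici (0:ℝ), g x)
        ≤ ∫ x in Set.Ici (0:ℝ), Set.indicator (Set.Icc p q) (fun _ => (1:ℝ)) x :=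
          setIntegral_mono hgint.integrableOn hiind.integrableOn hind
      _ = ∫ x in Set.Ici (0:ℝ) ∩ Set.Icc p q, (1:ℝ) :=
          setIntegral_indicator measurableSet_Icc
      _ = ∫ x in Set.Icc p q, (1:ℝ) := by
          rw [Set.inter_eq_self_of_subset_right
            (show Set.Icc p q ⊆ Set.Ici (0:ℝ) from
              fun x hx => le_trans (le_of_lt hp0) hx.1)]
      _ = (volume (Set.Icc p q)).toReal • (1:ℝ) := setIntegral_const _
      _ = q - p := by
          rw [Real.volume_Icc, smul_eq_mul, mul_one,
            ENNReal.toReal_ofReal (by linarith)]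
      _ < ε := by rw [hqp]; linarith
  -- final assembly
  refine ⟨q, lt_trans hSp hpq, N, hMN, b, ?_, g, gcont, fun x _ => gnonneg x,
    hgint.integrableOn, hintlt, ?_, ?_⟩
  · -- bounds on b
    intro n hMn hnN
    by_cases hn : ∃ k : Fin K, e k = n
    · have hbn : b n = u / (A * β ^ ((hn.choose : Fin K) : ℕ)) := by
        simp only [hb, dif_pos hn]
      set k₀ : Fin K := hn.choose with hk₀
      have hcv : v ≤ c n ∧ c n ≤ a * v := by
        have := hF n (hn.choose_spec ▸ he_mem k₀)
        exact ⟨this.2.1, this.2.2⟩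
      set bk : ℝ := β ^ ((k₀ : Fin K) : ℕ) with hbk
      have hbk1 : (1:ℝ) ≤ bk := one_le_pow₀ hβ1.le
      have hbk0 : (0:ℝ) < bk := lt_of_lt_of_le one_pos hbk1
      have hbka : bk ≤ a := by
        have h1 : ((k₀ : Fin K) : ℕ) ≤ K - 1 := by
          have := (k₀ : Fin K).isLt
          omega
        calc bk ≤ β ^ (K - 1) := pow_le_pow_right₀ hβ1.le h1
          _ ≤ a := hKpred
      have hbval : b n = a * v / bk := by
        rw [hbn, hu]
        field_simp
      have hbpos : 0 < b n := by rw [hbval]; positivity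
      have hbnv : v ≤ b n := by
        rw [hbval, le_div_iff₀ hbk0]
        nlinarith
      have hbav : b n ≤ a * v := by
        rw [hbval, div_le_iff₀ hbk0]
        nlinarith
      refine ⟨hbpos, ?_, ?_⟩
      · rw [div_le_div_iff₀ ha0 (hc n)]
        nlinarith [hcv.2]
      · rw [div_le_iff₀ (hc n)]
        nlinarith [hcv.1]
    · have hbn : b n = c n := by simp only [hb, dif_neg hn]
      rw [hbn, div_self (ne_of_gt (hc n))]
      exact ⟨hc n, by rw [div_le_one ha0]; linarith, le_of_lt ha⟩
  · -- vanishing outside [S, q]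
    intro x _ hx
    apply gzero
    simp only [Set.mem_Icc, not_and_or, not_le] at hx
    rcases hx with hx | hx
    · exact Or.inl (lt_trans hx hSp)
    · exact Or.inr hx
  · -- covering
    intro x hx
    have hxA : A ≤ x := hx.1
    have hxa : x ≤ A * a := by
      have hal : a ^ ((l : ℝ)) = A * a := by
        have h1 : ((l : ℝ) - 1) + 1 = (l : ℝ) := by ring
        rw [← h1, Real.rpow_add ha0, Real.rpow_one, ← hA]
      exact hal ▸ hx.2
    set Pk : ℕ → Prop := fun k => A * β ^ k ≤ x with hPk
    have hP0 : Pk 0 := by simpa [hPk] using hxA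
    set k := Nat.findGreatest Pk K with hkdef
    have hPkk : Pk k := Nat.findGreatest_spec (Nat.zero_le K) hP0
    have hkK : k ≤ K := Nat.findGreatest_le K
    have hkltK : k < K := by
      rcases lt_or_eq_of_le hkK with h | h
      · exact h
      · exfalso
        have hPK : Pk K := h ▸ hPkk
        rw [hPk] at hPK
        nlinarith [hKspec]
    have hnot : ¬ Pk (k + 1) := by
      intro h
      have := Nat.le_findGreatest (show k + 1 ≤ K by omega) h
      omega
    have hxup : x < A * β ^ (k + 1) := not_le.mp (by rwa [hPk] at hnot)
    refine ⟨e ⟨k, hkltK⟩, (hF _ (he_mem _)).1, hFN _ (he_mem _), ?_⟩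
    rw [hbe ⟨k, hkltK⟩]
    have hβk : (0:ℝ) < β ^ k := pow_pos hβ0 k
    have hxA' : A * β ^ k ≤ x := hPkk
    apply gone
    · rw [div_mul_eq_mul_div, le_div_iff₀ (by positivity)]
      calc u * (A * β ^ k) = (A * β ^ k) * u := by ring
        _ ≤ x * u := mul_le_mul_of_nonneg_right hxA' (le_of_lt hu0)
        _ = u * x := by ring
    · rw [div_mul_eq_mul_div, div_le_iff₀ (by positivity)]
      have : x ≤ A * (β ^ k * β) := by
        rw [← pow_succ]
        exact le_of_lt hxup
      calc u * x ≤ u * (A * (β ^ k * β)) :=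
            mul_le_mul_of_nonneg_left this (le_of_lt hu0)
        _ = β * u * (A * β ^ k) := by ring
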